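/- Quadratic alignment inequality on O(d)^{⊗n}: Let G, Ĝ ∈ O(d)^{⊗n} and let ĝ ∈ O(d) attain the minimum defining d(G,Ĝ), i.e. ‖Gĝ − Ĝ‖_F = d(G,Ĝ). Then ‖Ĝᵀ(Gĝ − Ĝ)‖_F ≤ (1/2)·d(G,Ĝ)². -/

import Mathlib

open Matrix BigOperators

noncomputable section
namespace GroupSync

variable {n d : ℕ}

/-- The positive semidefinite square root of a positive semidefinite matrix, as
`Matrix.PosSemidef.sqrt` was defined in older Mathlib. -/
def psdSqrtOld {m : Type*} [Fintype m] [DecidableEq m] {A : Matrix m m ℝ}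
    (hA : A.PosSemidef) : Matrix m m ℝ :=
  hA.isHermitian.eigenvectorUnitary.1 * diagonal ((↑) ∘ Real.sqrt ∘ hA.isHermitian.eigenvalues) *
    (star hA.isHermitian.eigenvectorUnitary : Matrix m m ℝ)

/-- Frobenius norm of a real matrix. -/
def frob {m k : Type*} [Fintype m] [Fintype k] (X : Matrix m k ℝ) : ℝ :=
  Real.sqrt (∑ i, ∑ j, (X i j) ^ 2)

/-- Spectral (operator) norm of a real matrix: the operator norm of the induced
linear map between Euclidean spaces. -/
def spec {m k : Type*} [Fintype m] [Fintype k] [DecidableEq k] (X : Matrix m k ℝ) : ℝ :=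
  ‖LinearMap.toContinuousLinearMap (Matrix.toEuclideanLin X)‖

/-- Nuclear norm: trace of the positive semidefinite square root of `X * Xᵀ`
(i.e. the sum of the singular values of `X`). -/
def nuclear {m k : Type*} [Fintype m] [Fintype k] [DecidableEq m] (X : Matrix m k ℝ) : ℝ :=
  (psdSqrtOld (Matrix.posSemidef_self_mul_conjTranspose X)).trace

/-- The positive semidefinite square root of `X * Xᵀ`. -/
def psdSqrtMulT {m k : Type*} [Fintype m] [Fintype k] [DecidableEq m] (X : Matrix m k ℝ) :
    Matrix m m ℝ :=
  psdSqrtOld (Matrix.posSemidef_self_mul_conjTranspose X)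

/-- Membership in the orthogonal group `O(d)`. -/
def IsOd (g : Matrix (Fin d) (Fin d) ℝ) : Prop :=
  gᵀ * g = 1 ∧ g * gᵀ = 1

/-- Membership in the special orthogonal group `SO(d)`. -/
def IsSOd (g : Matrix (Fin d) (Fin d) ℝ) : Prop :=
  IsOd g ∧ g.det = 1

/-- The `i`-th `d × d` block of an `nd × d` matrix. -/
def blk (X : Matrix (Fin n × Fin d) (Fin d) ℝ) (i : Fin n) : Matrix (Fin d) (Fin d) ℝ :=
  Matrix.of fun a b => X (i, a) b

/-- Membership in `O(d)^{⊗n}`: every `d × d` block is orthogonal. -/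
def OdN (G : Matrix (Fin n × Fin d) (Fin d) ℝ) : Prop :=
  ∀ i : Fin n, IsOd (blk G i)

/-- Membership in `SO(d)^{⊗n}`. -/
def SOdN (G : Matrix (Fin n × Fin d) (Fin d) ℝ) : Prop :=
  ∀ i : Fin n, IsSOd (blk G i)

/-- The `i`-th block column (an `nd × d` matrix) of an `nd × nd` matrix. -/
def bcol (M : Matrix (Fin n × Fin d) (Fin n × Fin d) ℝ) (i : Fin n) :
    Matrix (Fin n × Fin d) (Fin d) ℝ :=
  Matrix.of fun p b => M p (i, b)

/-- The `ij`-th `d × d` block of an `nd × nd` matrix. -/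
def dblk (M : Matrix (Fin n × Fin d) (Fin n × Fin d) ℝ) (i j : Fin n) :
    Matrix (Fin d) (Fin d) ℝ :=
  Matrix.of fun a b => M (i, a) (j, b)

/-- `G' ∈ T_α(G)` (where `Ct = C + α I`): `G' ∈ O(d)^{⊗n}` and each block `G'_i` is a
nearest point of `C̃ᵢᵀ G` in `O(d)` w.r.t. the Frobenius norm. -/
def InT (Ct : Matrix (Fin n × Fin d) (Fin n × Fin d) ℝ)
    (G G' : Matrix (Fin n × Fin d) (Fin d) ℝ) : Prop :=
  OdN G' ∧ ∀ i : Fin n, ∀ X : Matrix (Fin d) (Fin d) ℝ, IsOd X →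
    frob (blk G' i - (bcol Ct i)ᵀ * G) ≤ frob (X - (bcol Ct i)ᵀ * G)

/-- `G' ∈ ST_α(G)`: the `SO(d)` analogue of `InT`. -/
def InST (Ct : Matrix (Fin n × Fin d) (Fin n × Fin d) ℝ)
    (G G' : Matrix (Fin n × Fin d) (Fin d) ℝ) : Prop :=
  SOdN G' ∧ ∀ i : Fin n, ∀ X : Matrix (Fin d) (Fin d) ℝ, IsSOd X →
    frob (blk G' i - (bcol Ct i)ᵀ * G) ≤ frob (X - (bcol Ct i)ᵀ * G)

/-- The quotient distance `d(X, Y) = min_{g ∈ O(d)} ‖X − Y g‖_F`. -/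
def dOrth (X Y : Matrix (Fin n × Fin d) (Fin d) ℝ) : ℝ :=
  ⨅ g : {g : Matrix (Fin d) (Fin d) ℝ // IsOd g}, frob (X - Y * g.1)

/-- The objective function `f(G) = tr(Gᵀ C G)`. -/
def obj (C : Matrix (Fin n × Fin d) (Fin n × Fin d) ℝ)
    (G : Matrix (Fin n × Fin d) (Fin d) ℝ) : ℝ :=
  Matrix.trace (Gᵀ * C * G)

/-- Hadamard (entrywise) product. -/
def had {m k : Type*} (X Y : Matrix m k ℝ) : Matrix m k ℝ :=
  Matrix.of fun p q => X p q * Y p q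

/-- `W ⊗ (1_d 1_dᵀ)`, the Kronecker product of `W` with the all-ones `d × d` matrix. -/
def kron1 (W : Matrix (Fin n) (Fin n) ℝ) : Matrix (Fin n × Fin d) (Fin n × Fin d) ℝ :=
  Matrix.kroneckerMap (· * ·) W (Matrix.of fun (_ _ : Fin d) => (1 : ℝ))

/-- The all-ones matrix `1_m 1_mᵀ`. -/
def onesMat (m : Type*) : Matrix m m ℝ :=
  Matrix.of fun _ _ => (1 : ℝ)

/-- `symblockdiag`: symmetrize the diagonal `d × d` blocks, zero out all other blocks. -/
def sbd (X : Matrix (Fin n × Fin d) (Fin n × Fin d) ℝ) :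
    Matrix (Fin n × Fin d) (Fin n × Fin d) ℝ :=
  Matrix.of fun p q => if p.1 = q.1 then (X p q + X (p.1, q.2) (q.1, p.2)) / 2 else 0

/-- `S(G) = symblockdiag(C G Gᵀ) − C`. -/
def Smat (C : Matrix (Fin n × Fin d) (Fin n × Fin d) ℝ)
    (G : Matrix (Fin n × Fin d) (Fin d) ℝ) : Matrix (Fin n × Fin d) (Fin n × Fin d) ℝ :=
  sbd (C * (G * Gᵀ)) - C

/-- `G` is a second-order critical point of (QP): `S(G) G = 0` and
`⟨H, S(G) H⟩ ≥ 0` for all tangent directions `H` (blockwise `Hᵢ Gᵢᵀ` skew-symmetric). -/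
def IsSOC (C : Matrix (Fin n × Fin d) (Fin n × Fin d) ℝ)
    (G : Matrix (Fin n × Fin d) (Fin d) ℝ) : Prop :=
  Smat C G * G = 0 ∧
  ∀ H : Matrix (Fin n × Fin d) (Fin d) ℝ,
    (∀ i : Fin n, (blk H i * (blk G i)ᵀ)ᵀ = -(blk H i * (blk G i)ᵀ)) →
    0 ≤ Matrix.trace (Hᵀ * (Smat C G * H))

/-- Smallest singular value of a square matrix, as the minimum of `‖M v‖` over
unit vectors `v`. -/
def sigmaMin (M : Matrix (Fin d) (Fin d) ℝ) : ℝ :=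
  ⨅ v : {v : Fin d → ℝ // ∑ a, (v a) ^ 2 = 1}, Real.sqrt (∑ a, (M.mulVec v.1 a) ^ 2)

/-- The singular values of a square matrix: square roots of the eigenvalues of `Mᵀ M`. -/
def singVal (M : Matrix (Fin d) (Fin d) ℝ) (l : Fin d) : ℝ :=
  Real.sqrt ((show (Mᵀ * M).IsHermitian from
    Matrix.isHermitian_iff_isSymm.mpr (Matrix.isSymm_transpose_mul_self M)).eigenvalues l)

/-- Smallest eigenvalue of a (symmetric) matrix, as the minimum Rayleigh quotient
over unit vectors. -/
def lambdaMin {m : Type*} [Fintype m] (M : Matrix m m ℝ) : ℝ :=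
  ⨅ v : {v : m → ℝ // ∑ i, (v i) ^ 2 = 1}, v.1 ⬝ᵥ M.mulVec v.1

/-- `D_α(G)`: block diagonal of the psd square roots of `(C̃ᵢᵀ G)(C̃ᵢᵀ G)ᵀ`, minus `C̃`. -/
def Dmat (Ct : Matrix (Fin n × Fin d) (Fin n × Fin d) ℝ)
    (G : Matrix (Fin n × Fin d) (Fin d) ℝ) : Matrix (Fin n × Fin d) (Fin n × Fin d) ℝ :=
  (Matrix.of fun p q =>
    if p.1 = q.1 then psdSqrtMulT ((bcol Ct p.1)ᵀ * G) p.2 q.2 else 0) - Ct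

/-- The residual function `ρ_α(G) = ‖D_α(G) G‖_F`. -/
def rho (Ct : Matrix (Fin n × Fin d) (Fin n × Fin d) ℝ)
    (G : Matrix (Fin n × Fin d) (Fin d) ℝ) : ℝ :=
  frob (Dmat Ct G * G)

/-- Blockwise infinity norm: `‖X‖_∞ = max_i ‖X_i‖` (spectral norm of the blocks). -/
def binf (X : Matrix (Fin n × Fin d) (Fin d) ℝ) : ℝ :=
  ⨆ i : Fin n, spec (blk X i)

/-!
Write `Δ = G ĝ − Ĝ` and `S = Ĝᵀ G ĝ`. Since `GᵀG = ĜᵀĜ = n I`, expanding the square gives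
`ΔᵀΔ = 2 n I − S − Sᵀ` and `ĜᵀΔ = S − n I`. Minimality of `ĝ` says that `tr (S h) ≤ tr S` for
every `h ∈ O(d)`, and testing this against plane rotations shows that `S` is symmetric. Hence
`ĜᵀΔ = −½ ΔᵀΔ`, and `‖ΔᵀΔ‖_F ≤ ‖Δ‖_F² = d(G, Ĝ)²`.
-/

section Frobenius

attribute [local instance] Matrix.frobeniusNormedAddCommGroup Matrix.frobeniusNormSMulClass

variable {m k : Type*} [Fintype m] [Fintype k]

theorem frob_eq_norm (X : Matrix m k ℝ) : frob X = ‖X‖ := by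
  simp only [frob, Matrix.frobenius_norm_def, Real.norm_eq_abs, Real.rpow_two, sq_abs,
    Real.sqrt_eq_rpow]

theorem frob_smul (r : ℝ) (X : Matrix m k ℝ) : frob (r • X) = |r| * frob X := by
  rw [frob_eq_norm, frob_eq_norm, norm_smul, Real.norm_eq_abs]

theorem frob_transpose_mul_self_le (X : Matrix m k ℝ) : frob (Xᵀ * X) ≤ frob X ^ 2 := by
  simpa only [frob_eq_norm, Matrix.frobenius_norm_transpose, sq] using
    Matrix.frobenius_norm_mul Xᵀ X

theorem frob_sq_eq_trace (X : Matrix m k ℝ) : frob X ^ 2 = trace (Xᵀ * X) := by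
  rw [frob, Real.sq_sqrt (by positivity)]
  simp only [Matrix.trace, Matrix.diag, Matrix.mul_apply, Matrix.transpose_apply, sq]
  exact Finset.sum_comm

theorem frob_sub_sq (X Y : Matrix m k ℝ) :
    frob (X - Y) ^ 2 = frob X ^ 2 + frob Y ^ 2 - 2 * trace (Yᵀ * X) := by
  have hswap : trace (Xᵀ * Y) = trace (Yᵀ * X) := by
    rw [← Matrix.trace_transpose, Matrix.transpose_mul, Matrix.transpose_transpose]
  simp only [frob_sq_eq_trace, Matrix.transpose_sub, Matrix.sub_mul, Matrix.mul_sub,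
    Matrix.trace_sub, hswap]
  ring

theorem frob_mul_of_mem_orthogonalGroup [DecidableEq k] (X : Matrix m k ℝ)
    {q : Matrix k k ℝ} (hq : q ∈ orthogonalGroup k ℝ) : frob (X * q) = frob X := by
  have hsq : frob (X * q) ^ 2 = frob X ^ 2 := by
    rw [frob_sq_eq_trace, frob_sq_eq_trace, Matrix.trace_mul_comm, Matrix.transpose_mul,
      Matrix.mul_assoc, ← Matrix.mul_assoc q, (mem_orthogonalGroup_iff _ _).1 hq, Matrix.one_mul,
      Matrix.trace_mul_comm]
  exact (pow_left_inj₀ (Real.sqrt_nonneg _) (Real.sqrt_nonneg _) two_ne_zero).1 hsq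

end Frobenius

theorem isOd_iff_mem_orthogonalGroup {g : Matrix (Fin d) (Fin d) ℝ} :
    IsOd g ↔ g ∈ orthogonalGroup (Fin d) ℝ :=
  ⟨fun h => (mem_orthogonalGroup_iff _ _).2 h.2,
    fun h => ⟨(mem_orthogonalGroup_iff' _ _).1 h, (mem_orthogonalGroup_iff _ _).1 h⟩⟩

theorem transpose_mul_self_eq_sum_blk (X : Matrix (Fin n × Fin d) (Fin d) ℝ) :
    Xᵀ * X = ∑ i, (blk X i)ᵀ * blk X i := by
  ext a b
  simp [Matrix.mul_apply, Matrix.sum_apply, Fintype.sum_prod_type, blk]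

theorem OdN.transpose_mul_self {G : Matrix (Fin n × Fin d) (Fin d) ℝ} (hG : OdN G) :
    Gᵀ * G = (n : ℝ) • 1 := by
  rw [transpose_mul_self_eq_sum_blk]
  simp only [fun i => (hG i).1, Finset.sum_const, Finset.card_univ, Fintype.card_fin,
    Nat.cast_smul_eq_nsmul]

theorem dOrth_le_frob_mul_sub (X Y : Matrix (Fin n × Fin d) (Fin d) ℝ)
    {q : Matrix (Fin d) (Fin d) ℝ} (hq : IsOd q) : dOrth X Y ≤ frob (X * q - Y) := by
  have hqT : IsOd qᵀ := by rw [IsOd, Matrix.transpose_transpose]; exact hq.symm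
  have hshift : frob (X * q - Y) = frob (X - Y * qᵀ) := by
    rw [← frob_mul_of_mem_orthogonalGroup (X - Y * qᵀ) (isOd_iff_mem_orthogonalGroup.1 hq),
      Matrix.sub_mul, Matrix.mul_assoc, hq.1, Matrix.mul_one]
  rw [hshift, dOrth]
  have hbdd : BddBelow (Set.range fun p : {p : Matrix (Fin d) (Fin d) ℝ // IsOd p} =>
      frob (X - Y * p.1)) := ⟨0, by rintro _ ⟨p, rfl⟩; exact Real.sqrt_nonneg _⟩
  exact ciInf_le hbdd ⟨qᵀ, hqT⟩

theorem eq_zero_of_forall_mul_add_mul_le {A B : ℝ}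
    (h : ∀ c s : ℝ, c ^ 2 + s ^ 2 = 1 → c * A + s * B ≤ A) : B = 0 := by
  by_contra hB
  set r := Real.sqrt (A ^ 2 + B ^ 2)
  have hpos : 0 < A ^ 2 + B ^ 2 := by positivity
  have hr : 0 < r := Real.sqrt_pos.2 hpos
  have hr2 : r ^ 2 = A ^ 2 + B ^ 2 := Real.sq_sqrt hpos.le
  -- the rotation aligning `(c, s)` with `(A, B)` gives `r ≤ A`, impossible unless `B = 0`
  have hle := h (A / r) (B / r) (by field_simp; linarith)
  have hrA : r ≤ A := by
    rw [div_mul_eq_mul_div, div_mul_eq_mul_div, ← add_div, div_le_iff₀ hr] at hle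
    nlinarith
  nlinarith [sq_pos_of_ne_zero hB]

section PlaneRotation

variable {m : Type*} [Fintype m] [DecidableEq m]

/-- The rotation by the angle with cosine `c` and sine `s` in the coordinate plane `(i, j)`. -/
def planeRotation (i j : m) (c s : ℝ) : Matrix m m ℝ :=
  1 + (c - 1) • (single i i 1 + single j j 1) + s • (single j i 1 - single i j 1)

theorem planeRotation_mem_orthogonalGroup {i j : m} (hij : i ≠ j) {c s : ℝ}
    (hcs : c ^ 2 + s ^ 2 = 1) : planeRotation i j c s ∈ orthogonalGroup m ℝ := by
  rw [mem_orthogonalGroup_iff]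
  set P : Matrix m m ℝ := single i i 1 + single j j 1
  set K : Matrix m m ℝ := single j i 1 - single i j 1
  obtain ⟨hPP, hPK, hKP, hKK⟩ : P * P = P ∧ P * K = K ∧ K * P = K ∧ K * K = -P := by
    refine ⟨?_, ?_, ?_, ?_⟩ <;>
      simp only [P, K, add_mul, mul_add, sub_mul, mul_sub, single_mul_single_same, mul_one,
        single_mul_single_of_ne _ _ _ _ hij, single_mul_single_of_ne _ _ _ _ hij.symm] <;>
      abel
  have hT : (planeRotation i j c s)ᵀ = 1 + (c - 1) • P - s • K := by
    simp only [planeRotation, transpose_add, transpose_smul, transpose_sub, transpose_one,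
      transpose_single, P, K]
    module
  have hR : planeRotation i j c s = 1 + (c - 1) • P + s • K := rfl
  rw [hT, hR]
  simp only [add_mul, mul_add, mul_sub, smul_mul_assoc, mul_smul_comm, one_mul, mul_one,
    hPP, hPK, hKP, hKK, smul_neg]
  linear_combination (norm := module) hcs • P

theorem trace_mul_planeRotation (S : Matrix m m ℝ) (i j : m) (c s : ℝ) :
    trace (S * planeRotation i j c s)
      = trace S + (c - 1) * (S i i + S j j) + s * (S i j - S j i) := by
  simp [planeRotation, Matrix.mul_add, Matrix.mul_sub, trace_mul_single]
  ring

theorem isSymm_of_forall_trace_mul_le {S : Matrix m m ℝ}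
    (hS : ∀ R ∈ orthogonalGroup m ℝ, trace (S * R) ≤ trace S) : S.IsSymm := by
  refine IsSymm.ext fun i j => ?_
  rcases eq_or_ne i j with rfl | hij
  · rfl
  refine (sub_eq_zero.1 <|
    eq_zero_of_forall_mul_add_mul_le (A := S i i + S j j) fun c s hcs => ?_).symm
  have := hS _ (planeRotation_mem_orthogonalGroup hij hcs)
  rw [trace_mul_planeRotation] at this
  linarith

end PlaneRotation

theorem trace_mul_le_of_frob_eq_dOrth {G Gh : Matrix (Fin n × Fin d) (Fin d) ℝ}
    {g : Matrix (Fin d) (Fin d) ℝ} (hg : IsOd g) (hopt : frob (G * g - Gh) = dOrth G Gh)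
    {h : Matrix (Fin d) (Fin d) ℝ} (hh : h ∈ orthogonalGroup (Fin d) ℝ) :
    trace (Ghᵀ * (G * g) * h) ≤ trace (Ghᵀ * (G * g)) := by
  have hgh : IsOd (g * h) :=
    isOd_iff_mem_orthogonalGroup.2 (mul_mem (isOd_iff_mem_orthogonalGroup.1 hg) hh)
  have hle : frob (G * g - Gh) ^ 2 ≤ frob (G * g * h - Gh) ^ 2 := by
    have hmin := dOrth_le_frob_mul_sub G Gh hgh
    rw [← hopt, ← Matrix.mul_assoc] at hmin
    exact pow_le_pow_left₀ (Real.sqrt_nonneg _) hmin 2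
  rw [frob_sub_sq, frob_sub_sq, frob_mul_of_mem_orthogonalGroup _ hh] at hle
  simp only [Matrix.mul_assoc] at hle ⊢
  linarith

theorem transpose_sub_mul_sub_of_gram_eq {m k α : Type*} [Fintype m] [CommRing α]
    {X Y : Matrix m k α} (hgram : Xᵀ * X = Yᵀ * Y) (hsymm : (Yᵀ * X).IsSymm) :
    (X - Y)ᵀ * (X - Y) = -(2 : α) • (Yᵀ * (X - Y)) := by
  have hXY : Xᵀ * Y = Yᵀ * X := by
    rw [← hsymm.eq, Matrix.transpose_mul, Matrix.transpose_transpose]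
  rw [Matrix.transpose_sub, Matrix.sub_mul, Matrix.mul_sub, Matrix.mul_sub, hgram, hXY]
  module

/-- quadratic alignment inequality on `O(d)^{⊗n}`.
Let `G, Ĝ ∈ O(d)^{⊗n}` and let `ĝ ∈ O(d)` attain the minimum defining `d(G, Ĝ)`,
i.e. `‖G ĝ − Ĝ‖_F = d(G, Ĝ)`. Then `‖Ĝᵀ (G ĝ − Ĝ)‖_F ≤ (1/2)·d(G, Ĝ)²`. -/
theorem quadratic_alignment_inequality {n d : ℕ}
    (G Gh : Matrix (Fin n × Fin d) (Fin d) ℝ) (hG : OdN G) (hGh : OdN Gh)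
    (g : Matrix (Fin d) (Fin d) ℝ) (hg : IsOd g)
    (hopt : frob (G * g - Gh) = dOrth G Gh) :
    frob (Ghᵀ * (G * g - Gh)) ≤ (1 / 2) * dOrth G Gh ^ 2 := by
  have hgram : (G * g)ᵀ * (G * g) = Ghᵀ * Gh := by
    rw [Matrix.transpose_mul, Matrix.mul_assoc, ← Matrix.mul_assoc Gᵀ, hG.transpose_mul_self,
      hGh.transpose_mul_self, Matrix.smul_mul, Matrix.one_mul, Matrix.mul_smul, hg.1]
  have hsymm : (Ghᵀ * (G * g)).IsSymm :=
    isSymm_of_forall_trace_mul_le fun _ hh => trace_mul_le_of_frob_eq_dOrth hg hopt hh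
  have hkey := transpose_sub_mul_sub_of_gram_eq hgram hsymm
  calc frob (Ghᵀ * (G * g - Gh)) = frob ((G * g - Gh)ᵀ * (G * g - Gh)) / 2 := by
        rw [hkey, frob_smul, abs_neg, abs_two]
        ring
    _ ≤ frob (G * g - Gh) ^ 2 / 2 := by gcongr; exact frob_transpose_mul_self_le _
    _ = 1 / 2 * dOrth G Gh ^ 2 := by rw [hopt]; ring

end GroupSync
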